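/- Let v be a node in a 2-cut STT T with parent p and grandparent g. Then at least one of the splay steps at v, at p, or at g can be executed while preserving the 2-cut property. -/

import Mathlib

/-!
A splay step is a composition of rotations. Rotating `v` above its parent `p` keeps every
subtree other than those of `v` and `p`, gives `v` the old subtree of `p`, and the new boundary
of `p` is contained in `∂T_p ∪ {v}`. So a rotation preserves the 2-cut property when `p` is
not a separator, and also when `v` is one: the second boundary vertex `z ≠ p` of `T_v` lies in
`∂T_p`, and as `G` is a tree it drops out of the new boundary of `p`. A zig-zig at a node whose
grandparent is not a separator is two rotations under a non-separator parent; a zig-zag at a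
separator whose grandparent is not a separator, or whose parent is a separator too, is a
rotation of a separator followed by one of the two safe kinds.

Among `v`, `p`, `g` some node is then allowed: `v` if `g` is not a separator, `p` if the parent
of `g` is not one, and otherwise `g`, which is a separator with a separator parent.
-/

open SimpleGraph

variable {V : Type*}

/-- Reachability within a vertex set `S`. -/
def reachIn (G : SimpleGraph V) (S : Set V) : V → V → Prop :=
  Relation.ReflTransGen (fun x y => x ∈ S ∧ y ∈ S ∧ G.Adj x y)

/-- The connected component of `v` inside the vertex set `S`. -/
def compIn (G : SimpleGraph V) (S : Set V) (v : V) : Set V :=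
  {u | reachIn G S v u}

/-- `IsSearchTree G par S r`: the parent map `par` describes a search tree with root `r`
on the part of `G` induced by `S`, built recursively: the root `r` is chosen, and each
connected component of `S \ {r}` carries a search tree whose root is a child of `r`. -/
inductive IsSearchTree (G : SimpleGraph V) (par : V → Option V) : Set V → V → Prop where
  | node (S : Set V) (r : V) (ρ : V → V) (hr : r ∈ S)
      (hρ : ∀ v ∈ S, v ≠ r → par (ρ v) = some r)
      (h : ∀ v ∈ S, v ≠ r → IsSearchTree G par (compIn G (S \ {r}) v) (ρ v)) :
      IsSearchTree G par S r

/-- `isAnc par a v`: `a` is an ancestor of `v` (reflexively). -/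
def isAnc (par : V → Option V) (a v : V) : Prop :=
  Relation.ReflTransGen (fun x y => par x = some y) v a

/-- The subtree rooted at `v`: all descendants of `v` (including `v`). -/
def subtree (par : V → Option V) (v : V) : Set V := {u | isAnc par v u}

/-- The outer boundary `∂(T_v)` of the subtree rooted at `v`. -/
def bdry (G : SimpleGraph V) (par : V → Option V) (v : V) : Set V :=
  {x | x ∉ subtree par v ∧ ∃ u ∈ subtree par v, G.Adj x u}

/-- A search tree is 2-cut if every subtree boundary has size at most 2. -/
def TwoCut (G : SimpleGraph V) (par : V → Option V) : Prop :=
  ∀ v, (bdry G par v).ncard ≤ 2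

open Classical in
/-- The STT rotation of `v` with its parent `p`: `p` becomes a child of `v`, `v` takes the
former parent of `p`, and any child `c` of `v` with `p ∈ ∂(T_c)` is reattached to `p`. -/
noncomputable def rotate (G : SimpleGraph V) (par : V → Option V) (v p : V) :
    V → Option V := fun x =>
  if x = v then par p
  else if x = p then some v
  else if par x = some v ∧ p ∈ bdry G par x then some p
  else par x

/-- A splay step at `x`: a single rotation if `x` has no grandparent; a ZIG-ZAG
(two rotations at `x`) if `x` is a separator; a ZIG-ZIG (rotation at the parent,
then at `x`) otherwise. -/
noncomputable def splayStep (G : SimpleGraph V) (par : V → Option V) (x : V) :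
    V → Option V :=
  match par x with
  | none => par
  | some p =>
    match par p with
    | none => rotate G par x p
    | some g =>
      if (bdry G par x).ncard = 2 then
        rotate G (rotate G par x p) x g
      else
        rotate G (rotate G par p g) x p

section ReachIn

variable {G : SimpleGraph V} {S T C : Set V} {a b : V}

lemma reachIn.symm (h : reachIn G S a b) : reachIn G S b a := by
  induction h with
  | refl => exact .refl
  | tail _ hs ih => exact .head ⟨hs.2.1, hs.1, hs.2.2.symm⟩ ih

lemma reachIn.mono (hST : S ⊆ T) (h : reachIn G S a b) : reachIn G T a b :=
  Relation.ReflTransGen.mono (fun _ _ hs => ⟨hST hs.1, hST hs.2.1, hs.2.2⟩) _ _ h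

lemma reachIn_univ_of_reachable (h : G.Reachable a b) : reachIn G Set.univ a b := by
  obtain ⟨w⟩ := h
  induction w with
  | nil => exact .refl
  | cons h _ ih => exact .head ⟨trivial, trivial, h⟩ ih

lemma reachIn.exists_walk (h : reachIn G S a b) (ha : a ∈ S) :
    ∃ w : G.Walk a b, ∀ z ∈ w.support, z ∈ S := by
  induction h with
  | refl => exact ⟨.nil, by simpa using ha⟩
  | tail _ hs ih =>
    obtain ⟨w, hw⟩ := ih
    refine ⟨w.concat hs.2.2, fun z hz => ?_⟩
    rw [Walk.support_concat, List.mem_append, List.mem_singleton] at hz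
    exact hz.elim (hw z) (fun h => h ▸ hs.2.1)

lemma reachIn.exists_adj_of_notMem (h : reachIn G S a b) (ha : a ∉ C) (hb : b ∈ C) :
    ∃ x ∈ S, x ∉ C ∧ ∃ y ∈ C, G.Adj x y := by
  induction h with
  | refl => exact absurd hb ha
  | @tail c d _ hs ih =>
    by_cases hc : c ∈ C
    · exact ih hc
    · exact ⟨c, hs.1, hc, d, hb, hs.2.2⟩

lemma compIn_subset_insert : compIn G S a ⊆ insert a S := by
  intro u hu
  rcases Relation.ReflTransGen.cases_tail hu with h | ⟨_, _, hs⟩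
  · exact h ▸ Set.mem_insert _ _
  · exact Set.mem_insert_of_mem _ hs.2.1

lemma compIn_subset (ha : a ∈ S) : compIn G S a ⊆ S := fun _ hu =>
  (compIn_subset_insert hu).elim (fun h => h ▸ ha) id

lemma compIn_eq_of_mem (h : b ∈ compIn G S a) : compIn G S a = compIn G S b := by
  ext u
  exact ⟨fun hu => h.symm.trans hu, fun hu => h.trans hu⟩

lemma reachIn_compIn (h : reachIn G S a b) : reachIn G (compIn G S a) a b := by
  induction h with
  | refl => exact .refl
  | tail hac hcb ih => exact .tail ih ⟨hac, .tail hac hcb, hcb.2.2⟩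

lemma eq_compIn_of_closed (haC : a ∈ C) (hCS : C ⊆ S) (hC : ∀ u ∈ C, reachIn G C a u)
    (hcl : ∀ u ∈ C, ∀ w ∈ S, G.Adj u w → w ∈ C) : C = compIn G S a := by
  ext u
  refine ⟨fun hu => (hC u hu).mono hCS, fun hu => ?_⟩
  induction hu with
  | refl => exact haC
  | tail _ hs ih => exact hcl _ ih _ hs.2.1 hs.2.2

lemma eq_of_adj_of_reachIn (hac : G.IsAcyclic) {x : V} (hx : x ∉ S) (ha : a ∈ S)
    (hxa : G.Adj x a) (hxb : G.Adj x b) (hab : reachIn G S a b) : a = b := by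
  classical
  by_contra hne
  obtain ⟨w, hw⟩ := hab.exists_walk ha
  have hxw : x ∉ w.toPath.val.support := fun h =>
    hx (hw x (Walk.support_toPath_subset_support w h))
  have hpath : (Walk.cons hxa w.toPath.val).IsPath := w.toPath.2.cons hxw
  have huniq : (⟨_, hpath⟩ : G.Path x b) = Path.singleton hxb :=
    (hac.subsingleton_path x b).elim _ _
  have ha_mem : a ∈ (Walk.cons hxa w.toPath.val).support := by simp
  rw [show Walk.cons hxa w.toPath.val = ((⟨_, hpath⟩ : G.Path x b) : G.Walk x b) from rfl,
    huniq] at ha_mem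
  simp only [Path.singleton, Walk.support_cons, Walk.support_nil, List.mem_cons,
    List.not_mem_nil, or_false] at ha_mem
  exact ha_mem.elim hxa.ne' hne

end ReachIn

section Subtree

variable {par : V → Option V} {u w x y : V}

lemma mem_subtree_self : x ∈ subtree par x := .refl

lemma mem_subtree_of_par (h : par u = some w) (hw : w ∈ subtree par x) : u ∈ subtree par x :=
  .head h hw

lemma mem_subtree_of_par_eq (h : par u = some x) : u ∈ subtree par x :=
  mem_subtree_of_par h mem_subtree_self

lemma subtree_trans (hu : u ∈ subtree par w) (hw : w ∈ subtree par x) : u ∈ subtree par x :=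
  Relation.ReflTransGen.trans hu hw

lemma mem_subtree_cases (h : u ∈ subtree par x) :
    u = x ∨ ∃ w, par u = some w ∧ w ∈ subtree par x :=
  Relation.ReflTransGen.cases_head h

lemma exists_child_of_mem_subtree (hu : u ∈ subtree par x) (hne : u ≠ x) :
    ∃ c, par c = some x ∧ u ∈ subtree par c := by
  rcases Relation.ReflTransGen.cases_tail hu with h | ⟨c, hc, hcx⟩
  · exact absurd h.symm hne
  · exact ⟨c, hcx, hc⟩

lemma subtree_subset_of_closed {S : Set V} (hx : x ∈ S)
    (hS : ∀ u w, par u = some w → w ∈ subtree par x → w ∈ S → u ∈ S) :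
    subtree par x ⊆ S := by
  intro u hu
  induction hu using Relation.ReflTransGen.head_induction_on with
  | refl => exact hx
  | head h hw ih => exact hS _ _ h hw ih

lemma subtree_comparable (hx : u ∈ subtree par x) (hy : u ∈ subtree par y) :
    x ∈ subtree par y ∨ y ∈ subtree par x := by
  induction hx using Relation.ReflTransGen.head_induction_on with
  | refl => exact Or.inl hy
  | head h hwx ih =>
    rcases mem_subtree_cases hy with rfl | ⟨w', hw', hmem⟩
    · exact Or.inr (mem_subtree_of_par h hwx)
    · rw [h, Option.some_inj] at hw'
      exact ih (hw' ▸ hmem)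

lemma bdry_congr {G : SimpleGraph V} {par' : V → Option V}
    (h : subtree par x = subtree par' y) : bdry G par x = bdry G par' y := by
  unfold bdry
  rw [h]

end Subtree

/-- A flat form of `IsSearchTree G par Set.univ r` which, unlike the recursive definition, is
easily transported along rotations. -/
structure IsSTT (G : SimpleGraph V) (par : V → Option V) (r : V) : Prop where
  par_root : par r = none
  subtree_root : subtree par r = Set.univ
  subtree_eq_compIn : ∀ ⦃x y : V⦄, par x = some y →
    subtree par x = compIn G (subtree par y \ {y}) x

namespace IsSTT

variable {G : SimpleGraph V} {par : V → Option V} {r u x y : V} (hT : IsSTT G par r)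
include hT

lemma mem_subtree_root (x : V) : x ∈ subtree par r := hT.subtree_root ▸ Set.mem_univ x

lemma eq_root_of_par_eq_none (h : par x = none) : x = r := by
  rcases mem_subtree_cases (hT.mem_subtree_root x) with h' | ⟨_, hw, _⟩
  · exact h'
  · simp [h] at hw

lemma par_ne_self (x : V) : par x ≠ some x := by
  refine subtree_subset_of_closed (S := {u | par u ≠ some u}) (by simp [hT.par_root]) ?_
    (hT.mem_subtree_root x)
  intro u w huw _ hw hu
  rw [huw, Option.some_inj] at hu
  exact hw (hu ▸ huw)

lemma ne_of_par_eq (h : par x = some y) : x ≠ y := by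
  rintro rfl
  exact hT.par_ne_self x h

lemma subtree_subset_diff (h : par x = some y) : subtree par x ⊆ subtree par y \ {y} :=
  hT.subtree_eq_compIn h ▸ compIn_subset ⟨mem_subtree_of_par_eq h, hT.ne_of_par_eq h⟩

lemma par_notMem_subtree (h : par x = some y) : y ∉ subtree par x :=
  fun hy => (hT.subtree_subset_diff h hy).2 rfl

lemma par_ne_of_par_eq (h : par x = some y) : par y ≠ some x :=
  fun h' => hT.par_notMem_subtree h (mem_subtree_of_par_eq h')

lemma subtree_disjoint_of_siblings {c₁ c₂ : V} (h₁ : par c₁ = some y)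
    (h₂ : par c₂ = some y) (hne : c₁ ≠ c₂) (hu₁ : u ∈ subtree par c₁) :
    u ∉ subtree par c₂ := by
  intro hu₂
  rcases subtree_comparable hu₁ hu₂ with h | h
  · rcases mem_subtree_cases h with h' | ⟨w, hw, hmem⟩
    · exact hne h'
    · rw [h₁, Option.some_inj] at hw
      exact hT.par_notMem_subtree h₂ (hw ▸ hmem)
  · rcases mem_subtree_cases h with h' | ⟨w, hw, hmem⟩
    · exact hne h'.symm
    · rw [h₂, Option.some_inj] at hw
      exact hT.par_notMem_subtree h₁ (hw ▸ hmem)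

lemma reachIn_subtree (hconn : G.Preconnected) (hu : u ∈ subtree par x) :
    reachIn G (subtree par x) x u := by
  cases hx : par x with
  | none =>
    obtain rfl := hT.eq_root_of_par_eq_none hx
    rw [hT.subtree_root]
    exact reachIn_univ_of_reachable (hconn x u)
  | some y =>
    rw [hT.subtree_eq_compIn hx] at hu ⊢
    exact reachIn_compIn hu

lemma bdry_subset_insert (h : par x = some y) : bdry G par x ⊆ insert y (bdry G par y) := by
  rintro z ⟨hzx, u, hu, hadj⟩
  by_cases hzy : z = y
  · exact hzy ▸ Set.mem_insert _ _
  refine Set.mem_insert_of_mem _ ⟨fun hz => hzx ?_, u, (hT.subtree_subset_diff h hu).1, hadj⟩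
  rw [hT.subtree_eq_compIn h] at hu ⊢
  exact .tail hu ⟨compIn_subset (hT.subtree_subset_diff h mem_subtree_self) hu, ⟨hz, hzy⟩,
    hadj.symm⟩

lemma exists_adj_of_par_eq (hconn : G.Preconnected) (h : par x = some y) :
    ∃ w ∈ subtree par x, G.Adj y w := by
  obtain ⟨z, hzy, hzx, w, hw, hadj⟩ :=
    (hT.reachIn_subtree hconn (mem_subtree_of_par_eq h)).exists_adj_of_notMem
      (hT.par_notMem_subtree h) (mem_subtree_self (x := x))
  rcases hT.bdry_subset_insert h ⟨hzx, w, hw, hadj⟩ with rfl | hz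
  · exact ⟨w, hw, hadj⟩
  · exact absurd hzy hz.1

lemma par_mem_bdry (hconn : G.Preconnected) (h : par x = some y) : y ∈ bdry G par x := by
  obtain ⟨w, hw, hadj⟩ := hT.exists_adj_of_par_eq hconn h
  exact ⟨hT.par_notMem_subtree h, w, hw, hadj⟩

lemma bdry_root : bdry G par r = ∅ := by
  ext x
  simp [bdry, hT.subtree_root]

lemma subtree_eq_compIn_of_bdry (hconn : G.Preconnected) {A : Set V}
    (hA : subtree par x ⊆ A) (hbd : ∀ z ∈ bdry G par x, z ∉ A) :
    subtree par x = compIn G A x :=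
  eq_compIn_of_closed mem_subtree_self hA (fun _ => hT.reachIn_subtree hconn)
    fun u hu w hw hadj => by_contra fun hwx => hbd w ⟨hwx, u, hu, hadj.symm⟩ hw

end IsSTT

/-- `subtree` is computed in the whole parent map, so identifying `subtree par r` with `S` needs
that no parent pointer enters `S` from outside or from `r`. -/
def ChildClosed (par : V → Option V) (S : Set V) (r : V) : Prop :=
  ∀ u y, par u = some y → y ∈ S → u ∈ S ∧ u ≠ r

namespace IsSearchTree

variable {G : SimpleGraph V} {par : V → Option V} {S : Set V} {r : V}

lemma root_mem (hT : IsSearchTree G par S r) : r ∈ S := by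
  cases hT
  assumption

lemma mem_subtree_root (hT : IsSearchTree G par S r) : ∀ x ∈ S, x ∈ subtree par r := by
  induction hT with
  | node S r ρ _ hρ _ ih =>
    intro x hx
    by_cases hxr : x = r
    · exact hxr ▸ mem_subtree_self
    · exact subtree_trans (ih x hx hxr x .refl) (mem_subtree_of_par_eq (hρ x hx hxr))

lemma par_eq_root_or_mem_compIn (hT : IsSearchTree G par S r) :
    ∀ x ∈ S, x ≠ r → ∀ y, par x = some y → y = r ∨ y ∈ compIn G (S \ {r}) x := by
  induction hT with
  | node S r ρ _ hρ h ih =>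
    intro x hx hxr y hy
    by_cases hxρ : x = ρ x
    · rw [hxρ, hρ x hx hxr, Option.some_inj] at hy
      exact Or.inl hy.symm
    · refine Or.inr ?_
      rcases ih x hx hxr x .refl hxρ y hy with rfl | h'
      · exact (h x hx hxr).root_mem
      · have hx' : x ∈ compIn G (S \ {r}) x \ {ρ x} := ⟨.refl, hxρ⟩
        exact (compIn_subset hx' h').1

lemma subtree_root_eq (hT : IsSearchTree G par S r) (hcl : ChildClosed par S r) :
    subtree par r = S :=
  (subtree_subset_of_closed hT.root_mem fun u y hy _ hyS => (hcl u y hy hyS).1).antisymm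
    hT.mem_subtree_root

lemma childClosed_compIn (hT : IsSearchTree G par S r) (hcl : ChildClosed par S r)
    {ρ : V → V} (hρ : ∀ v ∈ S, v ≠ r → par (ρ v) = some r) {v : V} (hv : v ∈ S)
    (hvr : v ≠ r) :
    ChildClosed par (compIn G (S \ {r}) v) (ρ v) := by
  intro u y hy hyC
  have hyS : y ∈ S \ {r} := compIn_subset (show v ∈ S \ {r} from ⟨hv, hvr⟩) hyC
  obtain ⟨huS, hur⟩ := hcl u y hy hyS.1
  refine ⟨?_, fun hu => hyS.2 ?_⟩
  · rcases hT.par_eq_root_or_mem_compIn u huS hur y hy with rfl | hyu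
    · exact absurd rfl hyS.2
    · exact compIn_eq_of_mem hyC ▸ compIn_eq_of_mem hyu ▸ .refl
  · rw [hu, hρ v hv hvr, Option.some_inj] at hy
    exact hy.symm

lemma subtree_eq_compIn (hT : IsSearchTree G par S r) (hcl : ChildClosed par S r) :
    ∀ x ∈ S, x ≠ r → ∀ y, par x = some y →
      subtree par x = compIn G (subtree par y \ {y}) x := by
  induction hT with
  | node S r ρ hr hρ h ih =>
    intro x hx hxr y hy
    have hclC := (IsSearchTree.node S r ρ hr hρ h).childClosed_compIn hcl hρ hx hxr
    by_cases hxρ : x = ρ x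
    · rw [hxρ, hρ x hx hxr, Option.some_inj] at hy
      subst hy
      rw [(IsSearchTree.node S r ρ hr hρ h).subtree_root_eq hcl, hxρ,
        (h x hx hxr).subtree_root_eq hclC, ← hxρ]
    · exact ih x hx hxr hclC x .refl hxρ y hy

end IsSearchTree

lemma IsSTT.of_isSearchTree {G : SimpleGraph V} {par : V → Option V} {r : V}
    (hroot : par r = none) (hT : IsSearchTree G par Set.univ r) : IsSTT G par r := by
  have hcl : ChildClosed par Set.univ r :=
    fun u _ hu _ => ⟨trivial, by rintro rfl; simp [hroot] at hu⟩
  refine ⟨hroot, hT.subtree_root_eq hcl, fun x y hxy => ?_⟩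
  exact hT.subtree_eq_compIn hcl x trivial (by rintro rfl; simp [hroot] at hxy) y hxy

section Rotate

variable {G : SimpleGraph V} {par : V → Option V} {r u v p x : V}

lemma rotate_self : rotate G par v p v = par p := if_pos rfl

lemma rotate_parent (h : p ≠ v) : rotate G par v p p = some v := by
  unfold rotate
  rw [if_neg h, if_pos rfl]

lemma rotate_of_moved (hv : u ≠ v) (hp : u ≠ p) (h : par u = some v ∧ p ∈ bdry G par u) :
    rotate G par v p u = some p := by
  unfold rotate
  rw [if_neg hv, if_neg hp, if_pos h]

lemma rotate_of_not_moved (hv : u ≠ v) (hp : u ≠ p)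
    (h : ¬(par u = some v ∧ p ∈ bdry G par u)) :
    rotate G par v p u = par u := by
  unfold rotate
  rw [if_neg hv, if_neg hp, if_neg h]

variable (hT : IsSTT G par r) (hvp : par v = some p)
include hT hvp

lemma subtree_rotate_of_ne (hxv : x ≠ v) (hxp : x ≠ p) :
    subtree (rotate G par v p) x = subtree par x := by
  have hpv := (hT.ne_of_par_eq hvp).symm
  apply Set.Subset.antisymm
  · refine subtree_subset_of_closed mem_subtree_self fun u w huw hw' hw => ?_
    rcases eq_or_ne u v with rfl | huv
    · rw [rotate_self] at huw
      exact mem_subtree_of_par hvp (mem_subtree_of_par huw hw)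
    rcases eq_or_ne u p with rfl | hup
    · rw [rotate_parent hpv, Option.some_inj] at huw
      subst huw
      rcases mem_subtree_cases hw with rfl | ⟨w', hw'', hmem⟩
      · exact absurd rfl hxv
      · rw [hvp, Option.some_inj] at hw''
        exact hw'' ▸ hmem
    by_cases hm : par u = some v ∧ p ∈ bdry G par u
    · rw [rotate_of_moved huv hup hm, Option.some_inj] at huw
      exact mem_subtree_of_par hm.1 (mem_subtree_of_par hvp (huw ▸ hw))
    · rw [rotate_of_not_moved huv hup hm] at huw
      exact mem_subtree_of_par huw hw
  · refine subtree_subset_of_closed mem_subtree_self fun u w huw _ hw => ?_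
    have hv_of_p : p ∈ subtree (rotate G par v p) x → v ∈ subtree (rotate G par v p) x := by
      intro hp
      rcases mem_subtree_cases hp with rfl | ⟨w', hw'', hmem⟩
      · exact absurd rfl hxp
      · rw [rotate_parent hpv, Option.some_inj] at hw''
        exact hw'' ▸ hmem
    have hp_of_v : v ∈ subtree (rotate G par v p) x → p ∈ subtree (rotate G par v p) x :=
      mem_subtree_of_par (rotate_parent hpv)
    rcases eq_or_ne u v with rfl | huv
    · rw [hvp, Option.some_inj] at huw
      exact hv_of_p (huw ▸ hw)
    rcases eq_or_ne u p with rfl | hup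
    · exact hp_of_v (mem_subtree_of_par (rotate_self.trans huw) hw)
    by_cases hm : par u = some v ∧ p ∈ bdry G par u
    · rw [hm.1, Option.some_inj] at huw
      exact mem_subtree_of_par (rotate_of_moved huv hup hm) (hp_of_v (huw ▸ hw))
    · exact mem_subtree_of_par ((rotate_of_not_moved huv hup hm).trans huw) hw

lemma subtree_rotate_self : subtree (rotate G par v p) v = subtree par p := by
  have hpv := (hT.ne_of_par_eq hvp).symm
  apply Set.Subset.antisymm
  · refine subtree_subset_of_closed (mem_subtree_of_par_eq hvp) fun u w huw _ hw => ?_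
    rcases eq_or_ne u v with rfl | huv
    · exact mem_subtree_of_par_eq hvp
    rcases eq_or_ne u p with rfl | hup
    · exact mem_subtree_self
    by_cases hm : par u = some v ∧ p ∈ bdry G par u
    · exact mem_subtree_of_par hm.1 (mem_subtree_of_par_eq hvp)
    · rw [rotate_of_not_moved huv hup hm] at huw
      exact mem_subtree_of_par huw hw
  · refine subtree_subset_of_closed (mem_subtree_of_par_eq (rotate_parent hpv))
      fun u w huw _ hw => ?_
    rcases eq_or_ne u v with rfl | huv
    · exact mem_subtree_self
    rcases eq_or_ne u p with rfl | hup
    · exact mem_subtree_of_par_eq (rotate_parent hpv)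
    by_cases hm : par u = some v ∧ p ∈ bdry G par u
    · exact mem_subtree_of_par (rotate_of_moved huv hup hm)
        (mem_subtree_of_par_eq (rotate_parent hpv))
    · exact mem_subtree_of_par ((rotate_of_not_moved huv hup hm).trans huw) hw

end Rotate

section RotateParent

variable {G : SimpleGraph V} {par : V → Option V} {r u v p x : V}
variable (hT : IsSTT G par r) (hvp : par v = some p)
include hT hvp

lemma mem_subtree_rotate_parent_of_notMem (hup : u ∈ subtree par p) (huv : u ∉ subtree par v) :
    u ∈ subtree (rotate G par v p) p := by
  refine subtree_subset_of_closed
    (S := {u | u ∉ subtree par v → u ∈ subtree (rotate G par v p) p})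
    (fun _ => mem_subtree_self) ?_ hup huv
  intro u w huw hwp hw hu
  have hwv : w ∉ subtree par v := fun h => hu (mem_subtree_of_par huw h)
  have huv : u ≠ v := fun h => hu (h ▸ mem_subtree_self)
  have hup : u ≠ p := by
    rintro rfl
    exact hT.par_notMem_subtree huw hwp
  have hm : ¬(par u = some v ∧ p ∈ bdry G par u) := fun hm => hu (mem_subtree_of_par_eq hm.1)
  exact mem_subtree_of_par ((rotate_of_not_moved huv hup hm).trans huw) (hw hwv)

lemma subtree_subset_subtree_rotate_parent {c : V} (hc : par c = some v ∧ p ∈ bdry G par c) :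
    subtree par c ⊆ subtree (rotate G par v p) p := by
  have hcv : c ≠ v := hT.ne_of_par_eq hc.1
  have hcp : c ≠ p := by
    rintro rfl
    exact hc.2.1 mem_subtree_self
  refine subtree_subset_of_closed (mem_subtree_of_par_eq (rotate_of_moved hcv hcp hc))
    fun u w huw hwc hw => ?_
  have huc : u ∈ subtree par c := mem_subtree_of_par huw hwc
  have huv : u ≠ v := fun h => hT.par_notMem_subtree hc.1 (h ▸ huc)
  have hup : u ≠ p := fun h => hc.2.1 (h ▸ huc)
  have hm : ¬(par u = some v ∧ p ∈ bdry G par u) := by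
    rintro ⟨huv', _⟩
    rw [huv', Option.some_inj] at huw
    exact hT.par_notMem_subtree hc.1 (huw ▸ hwc)
  exact mem_subtree_of_par ((rotate_of_not_moved huv hup hm).trans huw) hw

lemma mem_subtree_rotate_parent_iff :
    u ∈ subtree (rotate G par v p) p ↔
      (u ∈ subtree par p ∧ u ∉ subtree par v) ∨
        ∃ c, (par c = some v ∧ p ∈ bdry G par c) ∧ u ∈ subtree par c := by
  refine ⟨fun hu => ?_, ?_⟩
  · refine subtree_subset_of_closed
      (S := {u | (u ∈ subtree par p ∧ u ∉ subtree par v) ∨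
        ∃ c, (par c = some v ∧ p ∈ bdry G par c) ∧ u ∈ subtree par c})
      (Or.inl ⟨mem_subtree_self, hT.par_notMem_subtree hvp⟩) (fun u w huw _ hw => ?_) hu
    rcases eq_or_ne u v with rfl | huv
    · rw [rotate_self] at huw
      refine absurd ?_ (hT.par_notMem_subtree huw)
      rcases hw with ⟨hwp, _⟩ | ⟨c, hc, hwc⟩
      · exact hwp
      · exact subtree_trans hwc (mem_subtree_of_par hc.1 (mem_subtree_of_par_eq hvp))
    rcases eq_or_ne u p with rfl | hup
    · exact Or.inl ⟨mem_subtree_self, hT.par_notMem_subtree hvp⟩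
    by_cases hm : par u = some v ∧ p ∈ bdry G par u
    · exact Or.inr ⟨u, hm, mem_subtree_self⟩
    rw [rotate_of_not_moved huv hup hm] at huw
    rcases hw with ⟨hwp, hwv⟩ | ⟨c, hc, hwc⟩
    · refine Or.inl ⟨mem_subtree_of_par huw hwp, fun huv' => ?_⟩
      rcases mem_subtree_cases huv' with rfl | ⟨w', hw', hmem⟩
      · exact huv rfl
      · rw [huw, Option.some_inj] at hw'
        exact hwv (hw' ▸ hmem)
    · exact Or.inr ⟨c, hc, mem_subtree_of_par huw hwc⟩
  · rintro (⟨hup, huv⟩ | ⟨c, hc, huc⟩)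
    · exact mem_subtree_rotate_parent_of_notMem hT hvp hup huv
    · exact subtree_subset_subtree_rotate_parent hT hvp hc huc

lemma subtree_rotate_parent_subset :
    subtree (rotate G par v p) p ⊆ subtree par p \ {v} := by
  intro u hu
  rcases (mem_subtree_rotate_parent_iff hT hvp).mp hu with ⟨hup, huv⟩ | ⟨c, hc, huc⟩
  · exact ⟨hup, fun h => huv (h ▸ mem_subtree_self)⟩
  · exact hT.subtree_subset_diff hc.1 huc |>.imp_left
      (subtree_trans · (mem_subtree_of_par_eq hvp))

lemma notMem_subtree_rotate_parent {c z : V} (hc : par c = some v) (hpc : p ∉ bdry G par c)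
    (hz : z ∈ subtree par c ∨ z ∈ bdry G par c) : z ∉ subtree (rotate G par v p) p := by
  intro hz'
  rcases hz with hzc | hzc
  · rcases (mem_subtree_rotate_parent_iff hT hvp).mp hz' with ⟨_, hzv⟩ | ⟨c', hc', hzc'⟩
    · exact hzv (subtree_trans hzc (mem_subtree_of_par_eq hc))
    · refine hT.subtree_disjoint_of_siblings hc'.1 hc ?_ hzc' hzc
      rintro rfl
      exact hpc hc'.2
  · have hz'p := subtree_rotate_parent_subset hT hvp hz'
    rcases hT.bdry_subset_insert hc hzc with rfl | hzv
    · exact hz'p.2 rfl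
    rcases hT.bdry_subset_insert hvp hzv with rfl | hzp
    · exact hpc hzc
    · exact hzp.1 hz'p.1

lemma subtree_rotate_parent_eq_compIn (hconn : G.Preconnected) :
    subtree (rotate G par v p) p = compIn G (subtree par p \ {v}) p := by
  have hreach : ∀ c, subtree par c ⊆ subtree (rotate G par v p) p →
      ∀ w ∈ subtree par c, G.Adj p w → ∀ u ∈ subtree par c,
        reachIn G (subtree (rotate G par v p) p) p u := fun c hc w hw hadj u hu =>
    .head ⟨mem_subtree_self, hc hw, hadj⟩
      (reachIn.mono hc ((hT.reachIn_subtree hconn hw).symm.trans (hT.reachIn_subtree hconn hu)))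
  refine eq_compIn_of_closed mem_subtree_self (subtree_rotate_parent_subset hT hvp)
    (fun u hu => ?_) (fun u hu w hw hadj => by_contra fun hw' => ?_)
  · rcases (mem_subtree_rotate_parent_iff hT hvp).mp hu with ⟨hup, huv⟩ | ⟨c, hc, huc⟩
    · rcases eq_or_ne u p with rfl | hup'
      · exact .refl
      obtain ⟨c, hc, huc⟩ := exists_child_of_mem_subtree hup hup'
      have hcv : c ≠ v := fun h => huv (h ▸ huc)
      have hsub : subtree par c ⊆ subtree (rotate G par v p) p := fun z hz =>
        mem_subtree_rotate_parent_of_notMem hT hvp (subtree_trans hz (mem_subtree_of_par_eq hc))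
          (hT.subtree_disjoint_of_siblings hc hvp hcv hz)
      obtain ⟨w, hw, hadj⟩ := hT.exists_adj_of_par_eq hconn hc
      exact hreach c hsub w hw hadj u huc
    · obtain ⟨_, w, hw, hadj⟩ := hc.2
      exact hreach c (subtree_subset_subtree_rotate_parent hT hvp hc) w hw hadj u huc
  · have hwv : w ∈ subtree par v := by
      by_contra h
      exact hw' (mem_subtree_rotate_parent_of_notMem hT hvp hw.1 h)
    obtain ⟨c, hc, hwc⟩ := exists_child_of_mem_subtree hwv hw.2
    by_cases hpc : p ∈ bdry G par c
    · exact hw' (subtree_subset_subtree_rotate_parent hT hvp ⟨hc, hpc⟩ hwc)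
    · have huc : u ∉ subtree par c := fun h =>
        notMem_subtree_rotate_parent hT hvp hc hpc (Or.inl h) hu
      exact notMem_subtree_rotate_parent hT hvp hc hpc (Or.inr ⟨huc, w, hwc, hadj⟩) hu

end RotateParent

section RotateIsSTT

variable {G : SimpleGraph V} {par : V → Option V} {r v p x : V}
variable (hT : IsSTT G par r) (hvp : par v = some p) (hconn : G.Preconnected)
include hT hvp hconn

lemma subtree_moved_eq_compIn (hm : par x = some v ∧ p ∈ bdry G par x) :
    subtree par x = compIn G (subtree (rotate G par v p) p \ {p}) x := by
  refine hT.subtree_eq_compIn_of_bdry hconn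
    (fun u hu => ⟨subtree_subset_subtree_rotate_parent hT hvp hm hu,
      fun h => hm.2.1 (h ▸ hu)⟩) fun z hz hz' => ?_
  have hzp := subtree_rotate_parent_subset hT hvp hz'.1
  rcases hT.bdry_subset_insert hm.1 hz with rfl | hzv
  · exact hzp.2 rfl
  rcases hT.bdry_subset_insert hvp hzv with rfl | hzp'
  · exact hz'.2 rfl
  · exact hzp'.1 hzp.1

lemma subtree_unmoved_eq_compIn (hxv : par x = some v) (hpx : p ∉ bdry G par x) :
    subtree par x = compIn G (subtree par p \ {v}) x := by
  refine hT.subtree_eq_compIn_of_bdry hconn (fun u hu => ?_) fun z hz hz' => ?_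
  · have hu' := hT.subtree_subset_diff hxv hu
    exact ⟨subtree_trans hu'.1 (mem_subtree_of_par_eq hvp), hu'.2⟩
  rcases hT.bdry_subset_insert hxv hz with rfl | hzv
  · exact hz'.2 rfl
  rcases hT.bdry_subset_insert hvp hzv with rfl | hzp
  · exact hpx hz
  · exact hzp.1 hz'.1

lemma subtree_sibling_eq_compIn (hxp : par x = some p) (hxv : x ≠ v) :
    subtree par x = compIn G (subtree (rotate G par v p) p \ {p}) x := by
  refine hT.subtree_eq_compIn_of_bdry hconn
    (fun u hu => ⟨mem_subtree_rotate_parent_of_notMem hT hvp (hT.subtree_subset_diff hxp hu).1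
      (hT.subtree_disjoint_of_siblings hxp hvp hxv hu), (hT.subtree_subset_diff hxp hu).2⟩)
    fun z hz hz' => ?_
  rcases hT.bdry_subset_insert hxp hz with rfl | hzp
  · exact hz'.2 rfl
  · exact hzp.1 (subtree_rotate_parent_subset hT hvp hz'.1).1

lemma subtree_rotate_eq_compIn ⦃x y : V⦄ (hxy : rotate G par v p x = some y) :
    subtree (rotate G par v p) x = compIn G (subtree (rotate G par v p) y \ {y}) x := by
  have hpv := (hT.ne_of_par_eq hvp).symm
  rcases eq_or_ne x v with rfl | hxv
  · rw [rotate_self] at hxy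
    have hyx : y ≠ x := fun h => hT.par_ne_of_par_eq hvp (h ▸ hxy)
    have hyp : y ≠ p := fun h => hT.par_ne_self p (h ▸ hxy)
    rw [subtree_rotate_self hT hvp, subtree_rotate_of_ne hT hvp hyx hyp, hT.subtree_eq_compIn hxy]
    exact compIn_eq_of_mem (hT.subtree_eq_compIn hxy ▸ mem_subtree_of_par_eq hvp)
  rcases eq_or_ne x p with rfl | hxp
  · rw [rotate_parent hpv, Option.some_inj] at hxy
    subst hxy
    rw [subtree_rotate_self hT hvp]
    exact subtree_rotate_parent_eq_compIn hT hvp hconn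
  rw [subtree_rotate_of_ne hT hvp hxv hxp]
  by_cases hm : par x = some v ∧ p ∈ bdry G par x
  · rw [rotate_of_moved hxv hxp hm, Option.some_inj] at hxy
    subst hxy
    exact subtree_moved_eq_compIn hT hvp hconn hm
  rw [rotate_of_not_moved hxv hxp hm] at hxy
  rcases eq_or_ne y v with rfl | hyv
  · rw [subtree_rotate_self hT hvp]
    exact subtree_unmoved_eq_compIn hT hvp hconn hxy fun h => hm ⟨hxy, h⟩
  rcases eq_or_ne y p with rfl | hyp
  · exact subtree_sibling_eq_compIn hT hvp hconn hxy hxv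
  rw [subtree_rotate_of_ne hT hvp hyv hyp]
  exact hT.subtree_eq_compIn hxy

/-- The root of the rotated tree is `v` if `p` was the root, and `r` otherwise. -/
lemma IsSTT.exists_rotate : ∃ r', IsSTT G (rotate G par v p) r' := by
  cases hp : par p with
  | none =>
    obtain rfl := hT.eq_root_of_par_eq_none hp
    exact ⟨v, rotate_self.trans hp, (subtree_rotate_self hT hvp).trans hT.subtree_root,
      subtree_rotate_eq_compIn hT hvp hconn⟩
  | some g =>
    have hrv : r ≠ v := by
      rintro rfl
      simp [hT.par_root] at hvp
    have hrp : r ≠ p := by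
      rintro rfl
      simp [hT.par_root] at hp
    have hrm : ¬(par r = some v ∧ p ∈ bdry G par r) := by simp [hT.par_root]
    exact ⟨r, (rotate_of_not_moved hrv hrp hrm).trans hT.par_root,
      (subtree_rotate_of_ne hT hvp hrv hrp).trans hT.subtree_root,
      subtree_rotate_eq_compIn hT hvp hconn⟩

end RotateIsSTT

section TwoCut

variable {G : SimpleGraph V} {par : V → Option V} {r v p g : V}

lemma twoCut_rotate_of_ncard_bdry_rotate_le (hT : IsSTT G par r) (hvp : par v = some p)
    (h2 : TwoCut G par) (hp : (bdry G (rotate G par v p) p).ncard ≤ 2) :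
    TwoCut G (rotate G par v p) := by
  intro x
  rcases eq_or_ne x v with rfl | hxv
  · rw [bdry_congr (subtree_rotate_self hT hvp)]
    exact h2 p
  rcases eq_or_ne x p with rfl | hxp
  · exact hp
  rw [bdry_congr (subtree_rotate_of_ne hT hvp hxv hxp)]
  exact h2 x

variable (hT : IsSTT G par r) (hvp : par v = some p) (hconn : G.Preconnected)
include hT hvp hconn

lemma bdry_rotate_parent_subset : bdry G (rotate G par v p) p ⊆ insert v (bdry G par p) := by
  obtain ⟨_, hT'⟩ := hT.exists_rotate hvp hconn
  rw [← bdry_congr (subtree_rotate_self hT hvp)]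
  exact hT'.bdry_subset_insert (rotate_parent (hT.ne_of_par_eq hvp).symm)

lemma twoCut_rotate_of_ncard_bdry_le_one [Finite V] (h2 : TwoCut G par)
    (hp : (bdry G par p).ncard ≤ 1) : TwoCut G (rotate G par v p) := by
  refine twoCut_rotate_of_ncard_bdry_rotate_le hT hvp h2 ?_
  calc (bdry G (rotate G par v p) p).ncard
      ≤ (insert v (bdry G par p)).ncard :=
        Set.ncard_le_ncard (bdry_rotate_parent_subset hT hvp hconn)
    _ ≤ (bdry G par p).ncard + 1 := Set.ncard_insert_le _ _
    _ ≤ 2 := by omega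

/-- The unique neighbour of `z` in `T_p` (`G` is acyclic) lies in `T_v`; if it stayed below `p`,
it would lie in a reattached `T_c` whose boundary contains `v`, `p` and `z`. -/
lemma notMem_bdry_rotate_parent [Finite V] (hac : G.IsAcyclic) (h2 : TwoCut G par) {z : V}
    (hzp : z ∈ bdry G par p) (hzv : z ∈ bdry G par v) : z ∉ bdry G (rotate G par v p) p := by
  rintro ⟨-, u, hu, hzu⟩
  obtain ⟨-, u', hu'v, hzu'⟩ := hzv
  have hvTp := mem_subtree_of_par_eq hvp
  have huTp := (subtree_rotate_parent_subset hT hvp hu).1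
  have hu'Tp := subtree_trans hu'v hvTp
  obtain rfl : u = u' := eq_of_adj_of_reachIn hac hzp.1 huTp hzu hzu'
    ((hT.reachIn_subtree hconn huTp).symm.trans (hT.reachIn_subtree hconn hu'Tp))
  rcases (mem_subtree_rotate_parent_iff hT hvp).mp hu with ⟨_, hnot⟩ | ⟨c, hc, huc⟩
  · exact hnot hu'v
  · have hzc : z ∈ bdry G par c :=
      ⟨fun h => hzp.1 (subtree_trans h (mem_subtree_of_par hc.1 hvTp)), u, huc, hzu⟩
    have h3 : 2 < (bdry G par c).ncard := (Set.two_lt_ncard_iff (Set.toFinite _)).mpr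
      ⟨v, p, z, hT.par_mem_bdry hconn hc.1, hc.2, hzc, hT.ne_of_par_eq hvp,
        fun h => hzp.1 (h ▸ hvTp), fun h => hzp.1 (h ▸ mem_subtree_self)⟩
    exact absurd (h2 c) (not_le.mpr h3)

lemma twoCut_rotate_of_separator [Finite V] (hac : G.IsAcyclic) (h2 : TwoCut G par)
    (hv : (bdry G par v).ncard = 2) : TwoCut G (rotate G par v p) := by
  obtain ⟨z, hzv, hzp⟩ := Set.exists_ne_of_one_lt_ncard (s := bdry G par v) (by omega) p
  have hz : z ∈ bdry G par p := (hT.bdry_subset_insert hvp hzv).resolve_left hzp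
  have hsub : bdry G (rotate G par v p) p ⊆ insert v (bdry G par p \ {z}) := fun w hw =>
    (bdry_rotate_parent_subset hT hvp hconn hw).imp_right fun hw' =>
      ⟨hw', fun (hwz : w = z) =>
        notMem_bdry_rotate_parent hT hvp hconn hac h2 hz hzv (hwz ▸ hw)⟩
  refine twoCut_rotate_of_ncard_bdry_rotate_le hT hvp h2 ?_
  have := Set.ncard_le_ncard hsub
  have := Set.ncard_insert_le v (bdry G par p \ {z})
  have := Set.ncard_sdiff_singleton_lt_of_mem hz
  have := h2 p
  omega

lemma twoCut_zigZig [Finite V] (h2 : TwoCut G par) (hpg : par p = some g)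
    (hv : (bdry G par v).ncard ≠ 2) (hg : (bdry G par g).ncard ≤ 1) :
    TwoCut G (rotate G (rotate G par p g) v p) := by
  obtain ⟨_, hT'⟩ := hT.exists_rotate hpg hconn
  have hvg : v ≠ g := by
    rintro rfl
    exact hT.par_ne_of_par_eq hvp hpg
  have hgv : g ∉ bdry G par v := fun hg =>
    hT.ne_of_par_eq hpg ((Set.ncard_le_one_iff (Set.toFinite _)).mp
      (by have := h2 v; omega) (hT.par_mem_bdry hconn hvp) hg)
  have hvp' : rotate G par p g v = some p :=
    (rotate_of_not_moved (hT.ne_of_par_eq hvp) hvg fun h => hgv h.2).trans hvp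
  refine twoCut_rotate_of_ncard_bdry_le_one hT' hvp' hconn
    (twoCut_rotate_of_ncard_bdry_le_one hT hpg hconn h2 hg) ?_
  rwa [bdry_congr (subtree_rotate_self hT hpg)]

lemma twoCut_zigZag [Finite V] (hac : G.IsAcyclic) (h2 : TwoCut G par) (hpg : par p = some g)
    (hv : (bdry G par v).ncard = 2)
    (hside : (bdry G par g).ncard ≤ 1 ∨ (bdry G par p).ncard = 2) :
    TwoCut G (rotate G (rotate G par v p) v g) := by
  obtain ⟨_, hT'⟩ := hT.exists_rotate hvp hconn
  have h1 := twoCut_rotate_of_separator hT hvp hconn hac h2 hv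
  have hvg' : rotate G par v p v = some g := rotate_self.trans hpg
  rcases hside with hg | hp
  · have hgv : g ≠ v := fun h => hT.par_ne_of_par_eq hvp (h ▸ hpg)
    refine twoCut_rotate_of_ncard_bdry_le_one hT' hvg' hconn h1 ?_
    rwa [bdry_congr (subtree_rotate_of_ne hT hvp hgv (hT.ne_of_par_eq hpg).symm)]
  · refine twoCut_rotate_of_separator hT' hvg' hconn hac h1 ?_
    rwa [bdry_congr (subtree_rotate_self hT hvp)]

end TwoCut

section Splay

variable {G : SimpleGraph V} {par : V → Option V}

/-- Validity of a splay step at `x`, as in the paper; when `x` is the root or a child of the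
root it holds vacuously. -/
def SplayAllowed (G : SimpleGraph V) (par : V → Option V) (x : V) : Prop :=
  ∀ y z, par x = some y → par y = some z →
    (bdry G par z).ncard ≠ 2 ∨ (bdry G par x).ncard = 2 ∧ (bdry G par y).ncard = 2

lemma twoCut_splayStep [Finite V] {r x : V} (hT : IsSTT G par r) (hconn : G.Preconnected)
    (hac : G.IsAcyclic) (h2 : TwoCut G par) (hx : SplayAllowed G par x) :
    TwoCut G (splayStep G par x) := by
  cases hxy : par x with
  | none => simpa only [splayStep, hxy] using h2
  | some y =>
    cases hyz : par y with
    | none =>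
      simp only [splayStep, hxy, hyz]
      refine twoCut_rotate_of_ncard_bdry_le_one hT hxy hconn h2 ?_
      rw [hT.eq_root_of_par_eq_none hyz, hT.bdry_root, Set.ncard_empty]
      exact zero_le_one
    | some z =>
      have hz := hx y z hxy hyz
      have h2z := h2 z
      simp only [splayStep, hxy, hyz]
      split_ifs with hsep
      · exact twoCut_zigZag hT hxy hconn hac h2 hyz hsep (hz.imp (by omega) And.right)
      · exact twoCut_zigZig hT hxy hconn h2 hyz hsep
          (by have := hz.resolve_right fun h => hsep h.1; omega)

lemma splayAllowed_somewhere {v p g : V} (hvp : par v = some p) (hpg : par p = some g) :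
    SplayAllowed G par v ∨ SplayAllowed G par p ∨ SplayAllowed G par g := by
  by_cases hg : (bdry G par g).ncard = 2
  · by_cases hgg : ∃ g', par g = some g' ∧ (bdry G par g').ncard ≠ 2
    · obtain ⟨g', hgg', hsep⟩ := hgg
      refine Or.inr (Or.inl fun y z hy hz => ?_)
      rw [hpg, Option.some_inj] at hy
      subst hy
      rw [hgg', Option.some_inj] at hz
      exact Or.inl (hz ▸ hsep)
    · push Not at hgg
      exact Or.inr (Or.inr fun y _ hy _ => Or.inr ⟨hg, hgg y hy⟩)
  · refine Or.inl fun y z hy hz => ?_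
    rw [hvp, Option.some_inj] at hy
    subst hy
    rw [hpg, Option.some_inj] at hz
    exact Or.inl (hz ▸ hg)

end Splay

/-- In a 2-cut STT, if `v` has parent `p` and grandparent `g`, then at
least one of the splay steps at `v`, at `p`, or at `g` preserves the 2-cut property. -/
theorem splayStep_somewhere_allowed [Fintype V] (G : SimpleGraph V)
    (hG : G.IsTree) (par : V → Option V) (r : V) (hroot : par r = none)
    (hT : IsSearchTree G par Set.univ r) (h2 : TwoCut G par)
    (v p g : V) (hvp : par v = some p) (hpg : par p = some g) :
    TwoCut G (splayStep G par v) ∨ TwoCut G (splayStep G par p) ∨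
      TwoCut G (splayStep G par g) := by
  have hsplay := fun x => twoCut_splayStep (x := x) (IsSTT.of_isSearchTree hroot hT)
    hG.connected.preconnected hG.isAcyclic h2
  exact (splayAllowed_somewhere hvp hpg).imp (hsplay v) (Or.imp (hsplay p) (hsplay g))
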